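/- Let P = Conv((0,0), (1,1), (0,3)) ⊂ ℝ^2. Then codeg(P) = 2, and the adjoint polytope (2P)^{(1)} equals Conv((1,2), (1,3), (4/3, 7/3)), which is not a lattice polytope. -/

import Mathlib

open Set Pointwise

noncomputable section

/-- A point of `ℝ²` is a lattice point if all its coordinates are integers. -/
def IsLatticePoint {n : ℕ} (x : Fin n → ℝ) : Prop := ∀ i, ∃ z : ℤ, x i = (z : ℝ)

/-- The codegree of a polytope `P ⊆ ℝⁿ`: the least positive integer `k` such that the
interior of `kP` contains a lattice point. -/
def codegree (n : ℕ) (P : Set (Fin n → ℝ)) : ℕ :=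
  sInf {k : ℕ | 0 < k ∧ ∃ x ∈ interior ((k : ℝ) • P), IsLatticePoint x}

/-!
All three polygons `P`, `2P` and `(2P)^{(1)}` have the facet normals `(1,0)`, `(-1,1)`, `(-2,-1)`
and differ only in their right-hand sides, so they are computed once and for all by a
vertex/half-plane description of that family of triangles. `P` has no interior lattice point
(one would need `0 < m < n` and `2m + n < 3`), while `(1,2)` is interior to `2P`: hence
`codeg P = 2`. Every lattice point `(m, n)` of `(2P)^{(1)}` satisfies `1 ≤ m`, `m + 1 ≤ n`,
`2m + n ≤ 5`, forcing `m = 1`; so the convex hull of its lattice points lies on the line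
`x₀ = 1` and misses the vertex `(4/3, 7/3)`.
-/

theorem codegree_eq_of_forall_lt {n k : ℕ} {P : Set (Fin n → ℝ)} (hk : 0 < k)
    (hmem : ∃ x ∈ interior ((k : ℝ) • P), IsLatticePoint x)
    (hlt : ∀ j, 0 < j → j < k → ∀ x ∈ interior ((j : ℝ) • P), ¬ IsLatticePoint x) :
    codegree n P = k :=
  le_antisymm (Nat.sInf_le ⟨hk, hmem⟩) <| le_csInf ⟨k, hk, hmem⟩
    fun j ⟨hj, x, hx, hlat⟩ => not_lt.1 fun hjk => hlt j hj hjk x hx hlat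

theorem smul_add_smul_add_smul_mem_convexHull {E : Type*} [AddCommGroup E] [Module ℝ E]
    {a b c : E} {α β γ : ℝ} (hα : 0 ≤ α) (hβ : 0 ≤ β) (hγ : 0 ≤ γ) (h : α + β + γ = 1) :
    α • a + β • b + γ • c ∈ convexHull ℝ {a, b, c} := by
  have := (convex_convexHull ℝ ({a, b, c} : Set E)).sum_mem (t := Finset.univ)
    (w := ![α, β, γ]) (z := ![a, b, c]) (by intro i _; fin_cases i <;> simpa)
    (by simp [Fin.sum_univ_three, h])
    (by intro i _; fin_cases i <;> exact subset_convexHull ℝ _ (by simp))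
  simpa [Fin.sum_univ_three] using this

theorem ne_convexHull_of_inter_subset_convex {E : Type*} [AddCommGroup E] [Module ℝ E]
    {Q C S V : Set E} (hC : Convex ℝ C) (hQS : Q ∩ S ⊆ C) {p : E} (hp : p ∈ Q) (hpC : p ∉ C)
    (hV : V ⊆ S) : Q ≠ convexHull ℝ V := by
  intro hQ
  have hVC : V ⊆ C := fun v hv => hQS ⟨hQ ▸ subset_convexHull ℝ V hv, hV hv⟩
  exact hpC (convexHull_min hVC hC (hQ ▸ hp))

section HalfSpace

variable {M : Type*} [AddCommGroup M] [TopologicalSpace M] [Module ℝ M]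

theorem interior_setOf_le_apply [ContinuousAdd M] [ContinuousSMul ℝ M] {f : StrongDual ℝ M}
    (hf : f ≠ 0) (c : ℝ) : interior {x | c ≤ f x} = {x | c < f x} := by
  have := ((f.isOpenMap_of_ne_zero hf).preimage_interior_eq_interior_preimage f.continuous
    (Ici c)).symm
  rwa [interior_Ici] at this

theorem smul_setOf_le_apply (f : StrongDual ℝ M) {t : ℝ} (ht : 0 < t) (c : ℝ) :
    t • {x | c ≤ f x} = {x | t * c ≤ f x} := by
  ext x
  simp [mem_smul_set_iff_inv_smul_mem₀ ht.ne', le_inv_mul_iff₀ ht]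

end HalfSpace

def normalTriangle (a b c : ℝ) : Set (Fin 2 → ℝ) :=
  {x | x 0 ≥ a ∧ -x 0 + x 1 ≥ b ∧ -2 * x 0 - x 1 ≥ c}

local notation "π₀" => (ContinuousLinearMap.proj 0 : StrongDual ℝ (Fin 2 → ℝ))
local notation "π₁" => (ContinuousLinearMap.proj 1 : StrongDual ℝ (Fin 2 → ℝ))

theorem normalTriangle_eq_inter (a b c : ℝ) : normalTriangle a b c =
    {x | a ≤ π₀ x} ∩ {x | b ≤ (-π₀ + π₁) x} ∩ {x | c ≤ (-2 • π₀ - π₁) x} := by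
  ext x
  simp [normalTriangle, and_assoc]

theorem convex_normalTriangle (a b c : ℝ) : Convex ℝ (normalTriangle a b c) := by
  rw [normalTriangle_eq_inter]
  exact ((convex_halfSpace_ge (LinearMap.isLinear _) a).inter
    (convex_halfSpace_ge (LinearMap.isLinear _) b)).inter
    (convex_halfSpace_ge (LinearMap.isLinear _) c)

theorem interior_normalTriangle (a b c : ℝ) :
    interior (normalTriangle a b c) = {x | x 0 > a ∧ -x 0 + x 1 > b ∧ -2 * x 0 - x 1 > c} := by
  have hne : ∀ f : StrongDual ℝ (Fin 2 → ℝ), f ![1, 0] ≠ 0 → f ≠ 0 :=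
    fun f hf h => hf (by simp [h])
  rw [normalTriangle_eq_inter, interior_inter, interior_inter,
    interior_setOf_le_apply (hne _ (by simp)), interior_setOf_le_apply (hne _ (by simp)),
    interior_setOf_le_apply (hne _ (by simp))]
  ext x
  simp [and_assoc]

theorem smul_normalTriangle {t : ℝ} (ht : 0 < t) (a b c : ℝ) :
    t • normalTriangle a b c = normalTriangle (t * a) (t * b) (t * c) := by
  simp only [normalTriangle_eq_inter, smul_set_inter₀ ht.ne', smul_setOf_le_apply _ ht]

theorem convexHull_eq_normalTriangle {a b c : ℝ} (h : 3 * a + b + c < 0) :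
    convexHull ℝ {![a, a + b], ![a, -2 * a - c], ![-(b + c) / 3, (2 * b - c) / 3]} =
      normalTriangle a b c := by
  refine le_antisymm (convexHull_min ?_ (convex_normalTriangle a b c)) ?_
  · rintro _ (rfl | rfl | rfl) <;> refine ⟨?_, ?_, ?_⟩ <;> simp <;> linarith
  · rintro x ⟨h₁, h₂, h₃⟩
    -- the barycentric coordinates are the facet slacks divided by `D`
    set D := -(3 * a + b + c)
    have hD : 0 < D := by linarith
    have hx : x = ((-2 * x 0 - x 1 - c) / D) • ![a, a + b]
        + ((-x 0 + x 1 - b) / D) • ![a, -2 * a - c]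
        + (3 * (x 0 - a) / D) • ![-(b + c) / 3, (2 * b - c) / 3] := by
      ext i; fin_cases i <;> simp <;> field_simp <;> ring
    rw [hx]
    exact smul_add_smul_add_smul_mem_convexHull (div_nonneg (by linarith) hD.le)
      (div_nonneg (by linarith) hD.le) (div_nonneg (by linarith) hD.le) (by field_simp; ring)

theorem not_isLatticePoint_of_mem_interior_normalTriangle {x : Fin 2 → ℝ}
    (hx : x ∈ interior (normalTriangle 0 0 (-3))) : ¬ IsLatticePoint x := by
  rw [interior_normalTriangle] at hx
  obtain ⟨h₁, h₂, h₃⟩ := hx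
  rintro hlat
  obtain ⟨m, hm⟩ := hlat 0
  obtain ⟨n, hn⟩ := hlat 1
  simp only [hm, hn] at h₁ h₂ h₃ ⊢
  have : 0 < m := by exact_mod_cast h₁
  have : m < n := by exact_mod_cast (by linarith : (m : ℝ) < n)
  have : -2 * m - n > -3 := by exact_mod_cast h₃
  omega

theorem eq_one_of_isLatticePoint_of_mem_normalTriangle {x : Fin 2 → ℝ} (hlat : IsLatticePoint x)
    (hx : x ∈ normalTriangle 1 1 (-5)) : x 0 = 1 := by
  obtain ⟨h₁, h₂, h₃⟩ := hx
  obtain ⟨m, hm⟩ := hlat 0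
  obtain ⟨n, hn⟩ := hlat 1
  simp only [hm, hn] at h₁ h₂ h₃ ⊢
  have : 1 ≤ m := by exact_mod_cast h₁
  have : m + 1 ≤ n := by exact_mod_cast (by linarith : (m : ℝ) + 1 ≤ n)
  have : -2 * m - n ≥ -5 := by exact_mod_cast h₃
  exact_mod_cast (by omega : m = 1)

theorem convexHull_P_eq_normalTriangle :
    convexHull ℝ {(![0, 0] : Fin 2 → ℝ), ![1, 1], ![0, 3]} = normalTriangle 0 0 (-3) := by
  have := convexHull_eq_normalTriangle (a := 0) (b := 0) (c := -3) (by norm_num)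
  norm_num at this
  rwa [pair_comm] at this

theorem normalTriangle_adjoint_eq_convexHull : normalTriangle 1 1 (-5) =
    convexHull ℝ {(![1, 2] : Fin 2 → ℝ), ![1, 3], ![4 / 3, 7 / 3]} := by
  have := convexHull_eq_normalTriangle (a := 1) (b := 1) (c := -5) (by norm_num)
  norm_num at this
  exact this.symm

/-- Let `P = Conv((0,0), (1,1), (0,3)) ⊆ ℝ²`, with facet presentation
`P = {x ≥ 0, -x + y ≥ 0, -2x - y ≥ -3}` (primitive inner normals).  Then `codeg(P) = 2`,
`2P = {x ≥ 0, -x + y ≥ 0, -2x - y ≥ -6}`, and the adjoint polytope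
`(2P)^{(1)} = {x ≥ 1, -x + y ≥ 1, -2x - y ≥ -5}` equals
`Conv((1,2), (1,3), (4/3, 7/3))`, which is not a lattice polytope. -/
theorem nonsmooth_adjoint_not_lattice :
    codegree 2 (convexHull ℝ {(![0, 0] : Fin 2 → ℝ), ![1, 1], ![0, 3]}) = 2 ∧
    (convexHull ℝ {(![0, 0] : Fin 2 → ℝ), ![1, 1], ![0, 3]} =
      {x : Fin 2 → ℝ | x 0 ≥ 0 ∧ -x 0 + x 1 ≥ 0 ∧ -2 * x 0 - x 1 ≥ -3}) ∧
    ((2 : ℝ) • convexHull ℝ {(![0, 0] : Fin 2 → ℝ), ![1, 1], ![0, 3]} =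
      {x : Fin 2 → ℝ | x 0 ≥ 0 ∧ -x 0 + x 1 ≥ 0 ∧ -2 * x 0 - x 1 ≥ -6}) ∧
    ({x : Fin 2 → ℝ | x 0 ≥ 1 ∧ -x 0 + x 1 ≥ 1 ∧ -2 * x 0 - x 1 ≥ -5} =
      convexHull ℝ {(![1, 2] : Fin 2 → ℝ), ![1, 3], ![4 / 3, 7 / 3]}) ∧
    ¬ ∃ V : Finset (Fin 2 → ℤ),
      convexHull ℝ {(![1, 2] : Fin 2 → ℝ), ![1, 3], ![4 / 3, 7 / 3]} =
        convexHull ℝ ((fun v : Fin 2 → ℤ => fun i => (v i : ℝ)) '' (V : Set (Fin 2 → ℤ))) := by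
  have h2P : (2 : ℝ) • convexHull ℝ {(![0, 0] : Fin 2 → ℝ), ![1, 1], ![0, 3]} =
      normalTriangle 0 0 (-6) := by
    rw [convexHull_P_eq_normalTriangle, smul_normalTriangle two_pos]
    norm_num
  refine ⟨?_, convexHull_P_eq_normalTriangle, h2P, normalTriangle_adjoint_eq_convexHull, ?_⟩
  · refine codegree_eq_of_forall_lt two_pos ⟨![1, 2], ?_, ?_⟩ fun j hj hj2 => ?_
    · rw [Nat.cast_ofNat, h2P, interior_normalTriangle]
      norm_num
    · intro i; fin_cases i
      exacts [⟨1, by simp⟩, ⟨2, by simp⟩]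
    · obtain rfl : j = 1 := by omega
      rw [Nat.cast_one, one_smul, convexHull_P_eq_normalTriangle]
      exact fun x hx => not_isLatticePoint_of_mem_interior_normalTriangle hx
  · rintro ⟨V, hV⟩
    refine ne_convexHull_of_inter_subset_convex (C := {x | x 0 = 1})
      (S := {x | IsLatticePoint x}) (convex_hyperplane (LinearMap.proj 0).isLinear 1) ?_
      (p := ![4 / 3, 7 / 3]) (subset_convexHull ℝ _ (by simp)) ?_ ?_ hV
    · rintro x ⟨hx, hlat⟩
      rw [← normalTriangle_adjoint_eq_convexHull] at hx
      exact eq_one_of_isLatticePoint_of_mem_normalTriangle hlat hx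
    · norm_num
    · rintro _ ⟨v, -, rfl⟩ i
      exact ⟨v i, rfl⟩
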